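/- Let W : (ZMod p)^n → ℂ be defined by W(a) = p^{(n+s)/2} ∑_{i=0}^{p^{n-s}-1} δ(a, w_i) μ(v_i) ζ_{p^k}^{d(v_i)} for an injective enumeration w_0,...,w_{p^{n-s}-1} of a set S ⊆ (ZMod p)^n of size p^{n-s}, a function d : (ZMod p)^{n-s} → ZMod (p^k), and a function μ with values in {±1} (resp. {±i}, resp. {1}) as appropriate. Then W is the Walsh transform of some generalized s-plateaued function f : (ZMod p)^n → ZMod (p^k) if and only if for every a ∈ (ZMod p)^n, (p^{(s-n)/2} ∑_{x ∈ (ZMod p)^{n-s}} μ(x) ζ_{p^k}^{d(x) + p^{k-1} ψ_a(x)})^{p^k} = 1, where ψ_a(v_i) = a·w_i. -/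

import Mathlib

/-!
The inverse Walsh transform of `W` is `b ↦ p^{(s-n)/2} ∑ₓ μ(x) ζ_{p^k}^{d(x)} ζ_p^{b·w(x)}`, whose
`p^k`-th powers appear on the right-hand side. The Walsh transform being injective, `W` is the
transform of some `f` iff this function takes values in the `p^k`-th roots of unity, i.e. is of the
form `ζ_{p^k}^{f(b)}`. The plateau condition is then automatic: `W` vanishes off the image of the
injective `w`, and on it `|W| = p^{(n+s)/2} |μ| = p^{(n+s)/2}`.
-/

/-- The complex primitive `m`-th root of unity `e^{2πi/m}`. -/
noncomputable def zeta (m : ℕ) : ℂ := Complex.exp (2 * Real.pi * Complex.I / m)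

/-- Inner product on `(ZMod p)^n`. -/
def dot {p n : ℕ} (a x : Fin n → ZMod p) : ZMod p := ∑ i, a i * x i

/-- Walsh transform of a generalized p-ary function `f : (ZMod p)^n → ZMod (p^k)`. -/
noncomputable def walsh (p n k : ℕ) [Fact (Nat.Prime p)]
    (f : (Fin n → ZMod p) → ZMod (p ^ k)) (a : Fin n → ZMod p) : ℂ :=
  ∑ x : Fin n → ZMod p, zeta (p ^ k) ^ (f x).val * zeta p ^ ((-(dot a x)).val)

open Finset Matrix
open ZMod (stdAddChar)

lemma isPrimitiveRoot_zeta (N : ℕ) [NeZero N] : IsPrimitiveRoot (zeta N) N :=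
  Complex.isPrimitiveRoot_exp N (NeZero.ne N)

lemma zeta_pow (N : ℕ) [NeZero N] (j : ℕ) : zeta N ^ j = stdAddChar (j : ZMod N) := by
  rw [ZMod.stdAddChar_apply, ZMod.toCircle_natCast, zeta, ← Complex.exp_nat_mul]
  ring_nf

lemma zeta_pow_val (N : ℕ) [NeZero N] (t : ZMod N) : zeta N ^ t.val = stdAddChar t := by
  rw [zeta_pow, ZMod.natCast_zmod_val]

lemma zeta_mul_pow (a b : ℕ) (ha : a ≠ 0) : zeta (a * b) ^ a = zeta b := by
  rw [zeta, zeta, ← Complex.exp_nat_mul]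
  congr 1
  push_cast
  field_simp

lemma stdAddChar_pow_pred_mul_val (p k : ℕ) [NeZero p] (hk : k ≠ 0) (j : ZMod p) :
    stdAddChar ((p : ZMod (p ^ k)) ^ (k - 1) * (j.val : ZMod (p ^ k))) = stdAddChar j := by
  have hpk : p ^ (k - 1) * p = p ^ k := pow_sub_one_mul hk p
  rw [← Nat.cast_pow, ← Nat.cast_mul, ← zeta_pow, ← zeta_pow_val, pow_mul, ← zeta_mul_pow _ p,
    hpk]
  exact pow_ne_zero _ (NeZero.ne p)

lemma exists_zeta_pow_val_eq {N : ℕ} [NeZero N] {z : ℂ} (hz : z ^ N = 1) :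
    ∃ t : ZMod N, zeta N ^ t.val = z := by
  obtain ⟨i, hi, rfl⟩ := (isPrimitiveRoot_zeta N).eq_pow_of_pow_eq_one hz
  exact ⟨i, by rw [ZMod.val_natCast_of_lt hi]⟩

lemma dot_eq_dotProduct {p n : ℕ} (a x : Fin n → ZMod p) : dot a x = a ⬝ᵥ x := rfl

section Fourier

variable {N : ℕ} [NeZero N] {ι : Type*} [Fintype ι] [DecidableEq ι]

lemma sum_stdAddChar_dotProduct (c : ι → ZMod N) :
    ∑ x, stdAddChar (c ⬝ᵥ x) = if c = 0 then (N : ℂ) ^ Fintype.card ι else 0 := by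
  have hprod : ∀ x : ι → ZMod N, stdAddChar (c ⬝ᵥ x) = ∏ i, stdAddChar (x i * c i) := fun x => by
    simp_rw [dotProduct, mul_comm (c _)]
    exact map_prod (stdAddChar (N := N)).toMonoidHom (fun i => Multiplicative.ofAdd (x i * c i)) _
  simp_rw [hprod]
  rw [← Fintype.prod_sum (fun i t => stdAddChar (t * c i))]
  simp_rw [AddChar.sum_mulShift _ (ZMod.isPrimitive_stdAddChar N), ZMod.card, Nat.cast_ite,
    Nat.cast_zero, Fintype.prod_ite_zero, prod_const, card_univ, funext_iff, Pi.zero_apply]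

lemma sum_stdAddChar_dotProduct_mul_neg (u v : ι → ZMod N) :
    ∑ x, stdAddChar (x ⬝ᵥ u) * stdAddChar (-(v ⬝ᵥ x)) =
      if v = u then (N : ℂ) ^ Fintype.card ι else 0 := by
  simp_rw [← AddChar.map_add_eq_mul, dotProduct_comm v, ← dotProduct_neg, ← dotProduct_add,
    dotProduct_comm _ (u + -v), sum_stdAddChar_dotProduct, ← sub_eq_add_neg, sub_eq_zero, eq_comm]

noncomputable def walshTransform (F : (ι → ZMod N) → ℂ) (a : ι → ZMod N) : ℂ :=
  ∑ x, F x * stdAddChar (-(a ⬝ᵥ x))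

lemma walshTransform_sum_stdAddChar {κ : Type*} [Fintype κ] (c : κ → ℂ) (u : κ → ι → ZMod N)
    (a : ι → ZMod N) :
    walshTransform (fun b => ∑ i, c i * stdAddChar (b ⬝ᵥ u i)) a =
      (N : ℂ) ^ Fintype.card ι * ∑ i, (if a = u i then 1 else 0) * c i := by
  calc walshTransform (fun b => ∑ i, c i * stdAddChar (b ⬝ᵥ u i)) a
      = ∑ i, c i * ∑ x, stdAddChar (x ⬝ᵥ u i) * stdAddChar (-(a ⬝ᵥ x)) := by
        simp_rw [walshTransform, sum_mul, mul_sum, mul_assoc]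
        exact sum_comm
    _ = _ := by
        simp_rw [sum_stdAddChar_dotProduct_mul_neg, mul_sum]
        refine sum_congr rfl fun i _ => ?_
        split_ifs <;> ring

lemma sum_walshTransform_mul_stdAddChar (F : (ι → ZMod N) → ℂ) (b : ι → ZMod N) :
    ∑ a, walshTransform F a * stdAddChar (a ⬝ᵥ b) = (N : ℂ) ^ Fintype.card ι * F b := by
  calc ∑ a, walshTransform F a * stdAddChar (a ⬝ᵥ b)
      = ∑ x, F x * ∑ a, stdAddChar (a ⬝ᵥ b) * stdAddChar (-(x ⬝ᵥ a)) := by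
        simp_rw [walshTransform, sum_mul, mul_sum]
        rw [sum_comm]
        refine sum_congr rfl fun x _ => sum_congr rfl fun a _ => ?_
        rw [dotProduct_comm x a]
        ring
    _ = _ := by
        simp_rw [sum_stdAddChar_dotProduct_mul_neg, mul_ite, mul_zero, sum_ite_eq', mem_univ,
          if_true, mul_comm]

lemma walshTransform_injective :
    Function.Injective (walshTransform : ((ι → ZMod N) → ℂ) → (ι → ZMod N) → ℂ) := by
  intro F G hFG
  funext b
  have hN : (N : ℂ) ^ Fintype.card ι ≠ 0 := pow_ne_zero _ (Nat.cast_ne_zero.mpr (NeZero.ne N))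
  refine mul_left_cancel₀ hN ?_
  rw [← sum_walshTransform_mul_stdAddChar, ← sum_walshTransform_mul_stdAddChar, hFG]

end Fourier

lemma walsh_eq_walshTransform (p n k : ℕ) [Fact (Nat.Prime p)]
    (f : (Fin n → ZMod p) → ZMod (p ^ k)) :
    walsh p n k f = walshTransform (fun x => zeta (p ^ k) ^ (f x).val) := by
  have : NeZero p := ⟨(Fact.out : p.Prime).ne_zero⟩
  funext a
  simp only [walsh, walshTransform, zeta_pow_val, dot_eq_dotProduct]

lemma norm_mul_sum_ite_eq_or_eq_zero {κ α : Type*} [Fintype κ] [DecidableEq α] {w : κ → α}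
    (hw : Function.Injective w) {g : κ → ℂ} (hg : ∀ i, ‖g i‖ = 1) (c : ℂ) (a : α) :
    ‖c * ∑ i, (if a = w i then 1 else 0) * g i‖ = ‖c‖ ∨
      c * ∑ i, (if a = w i then 1 else 0) * g i = 0 := by
  by_cases ha : ∃ v, a = w v
  · obtain ⟨v, rfl⟩ := ha
    left
    simp only [ite_mul, one_mul, zero_mul]
    rw [sum_eq_single v (fun x _ hx => if_neg (hw.ne hx.symm)) (by simp), if_pos rfl, norm_mul,
      hg, mul_one]
  · right
    push Not at ha
    simp [ha]

lemma cpow_half_sub_mul_pow (p n s : ℕ) (hp : p ≠ 0) :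
    (p : ℂ) ^ (((s : ℂ) - n) / 2) * (p : ℂ) ^ n = (((p : ℝ) ^ (((n : ℝ) + s) / 2) : ℝ) : ℂ) := by
  have hp0 : (0 : ℝ) < p := by positivity
  have hexp : ((s : ℂ) - n) / 2 = (((s - n) / 2 : ℝ) : ℂ) := by push_cast; ring
  rw [hexp, ← Complex.ofReal_natCast p, ← Complex.ofReal_cpow hp0.le, ← Complex.ofReal_pow,
    ← Complex.ofReal_mul, ← Real.rpow_natCast, ← Real.rpow_add hp0]
  congr 2
  ring

lemma norm_eq_one_of_prime_cases {p : ℕ} (hp : p.Prime) {E : Prop} {z : ℂ}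
    (hz : (p = 2 → z = 1) ∧ (p ≠ 2 → (p % 4 = 1 ∨ E) → (z = 1 ∨ z = -1)) ∧
      (p ≠ 2 → p % 4 = 3 → ¬ E → (z = Complex.I ∨ z = -Complex.I))) : ‖z‖ = 1 := by
  obtain ⟨h2, h14, h3⟩ := hz
  by_cases hp2 : p = 2
  · simp [h2 hp2]
  have hodd : p % 4 = 1 ∨ p % 4 = 3 := by
    have := Nat.odd_iff.mp (hp.odd_of_ne_two hp2); omega
  by_cases hE : E
  · rcases h14 hp2 (Or.inr hE) with rfl | rfl <;> simp
  rcases hodd with h | h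
  · rcases h14 hp2 (Or.inl h) with rfl | rfl <;> simp
  · rcases h3 hp2 h hE with rfl | rfl <;> simp

theorem stmt4 (p n k s : ℕ) [Fact (Nat.Prime p)]
    (hk : 1 ≤ k)
    (w : (Fin (n - s) → ZMod p) → (Fin n → ZMod p)) (hw : Function.Injective w)
    (d : (Fin (n - s) → ZMod p) → ZMod (p ^ k))
    (μ : (Fin (n - s) → ZMod p) → ℂ)
    (hμ : ∀ x, (p = 2 → μ x = 1) ∧
      (p ≠ 2 → (p % 4 = 1 ∨ Even (n + s)) → (μ x = 1 ∨ μ x = -1)) ∧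
      (p ≠ 2 → p % 4 = 3 → ¬ Even (n + s) → (μ x = Complex.I ∨ μ x = -Complex.I)))
    (W : (Fin n → ZMod p) → ℂ)
    (hW : ∀ a, W a = ((p : ℝ) ^ (((n : ℝ) + (s : ℝ)) / 2) : ℝ) *
      ∑ x : Fin (n - s) → ZMod p,
        (if a = w x then (1 : ℂ) else 0) * μ x * zeta (p ^ k) ^ (d x).val) :
    (∃ f : (Fin n → ZMod p) → ZMod (p ^ k),
        (∀ a, ‖walsh p n k f a‖ = (p : ℝ) ^ (((n : ℝ) + (s : ℝ)) / 2) ∨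
          walsh p n k f a = 0) ∧
        ∀ a, walsh p n k f a = W a) ↔
      ∀ a : Fin n → ZMod p,
        (((p : ℂ) ^ ((((s : ℂ)) - (n : ℂ)) / 2)) *
          ∑ x : Fin (n - s) → ZMod p,
            μ x * zeta (p ^ k) ^
              ((d x + (p : ZMod (p ^ k)) ^ (k - 1) *
                (((dot a (w x)).val : ℕ) : ZMod (p ^ k))).val)) ^ (p ^ k) = 1 := by
  have hp : p.Prime := Fact.out
  have : NeZero p := ⟨hp.ne_zero⟩
  set c : ℂ := (p : ℂ) ^ (((s : ℂ) - n) / 2)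
  set g : (Fin (n - s) → ZMod p) → ℂ := fun x => μ x * zeta (p ^ k) ^ (d x).val
  -- `T` is the candidate for `ζ_{p^k}^f`, read off from `W` by Fourier inversion.
  set T : (Fin n → ZMod p) → ℂ := fun b => ∑ x, c * g x * stdAddChar (b ⬝ᵥ w x)
  have hT : ∀ a, c * ∑ x, μ x * zeta (p ^ k) ^ (d x + (p : ZMod (p ^ k)) ^ (k - 1) *
      (((dot a (w x)).val : ℕ) : ZMod (p ^ k))).val = T a := fun a => by
    simp_rw [mul_sum, zeta_pow_val, AddChar.map_add_eq_mul,
      stdAddChar_pow_pred_mul_val p k (by omega), T, g, zeta_pow_val, dot_eq_dotProduct]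
    exact sum_congr rfl fun x _ => by ring
  have hWT : walshTransform T = W := funext fun a => by
    rw [walshTransform_sum_stdAddChar, hW, Fintype.card_fin,
      ← cpow_half_sub_mul_pow p n s hp.ne_zero, mul_sum, mul_sum]
    exact sum_congr rfl fun x _ => by ring
  simp only [hT, walsh_eq_walshTransform]
  constructor
  · rintro ⟨f, -, hf⟩ a
    rw [← congrFun (walshTransform_injective (funext hf |>.trans hWT.symm)) a, ← pow_mul,
      mul_comm, pow_mul, (isPrimitiveRoot_zeta _).pow_eq_one, one_pow]
  · intro h
    choose f hf using fun a => exists_zeta_pow_val_eq (h a)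
    have hfW : walshTransform (fun x => zeta (p ^ k) ^ (f x).val) = W := by
      rw [funext hf, hWT]
    refine ⟨f, fun a => ?_, congrFun hfW⟩
    have hg : ∀ x, ‖g x‖ = 1 := fun x => by
      rw [norm_mul, norm_pow, norm_eq_one_of_prime_cases hp (hμ x),
        (isPrimitiveRoot_zeta _).norm'_eq_one (NeZero.ne _), one_pow, one_mul]
    have hP : 0 ≤ (p : ℝ) ^ (((n : ℝ) + s) / 2) := by positivity
    rw [hfW, hW]
    simp only [mul_assoc]
    have key := norm_mul_sum_ite_eq_or_eq_zero hw hg (((p : ℝ) ^ (((n : ℝ) + s) / 2) : ℝ) : ℂ) a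
    rwa [Complex.norm_real, Real.norm_of_nonneg hP] at key
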